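/- arXiv:0803.3073 — 3 statements merged into one kernel-verified Lean document; each statement's English description precedes it below -/
import Mathlib

section
/- For real numbers x > 1 and y, we have y = ln x if and only if for every positive integer n, |U_n - y| \le (x^2 - 2x + 1)/(n x), where U_n = \sum_{k=0}^{n-1} ((x-1)/n) \cdot (1/(1 + k(x-1)/n)). -/
/-! For an antitone `f` on `[a, b]` the left-endpoint (upper) and right-endpoint (lower) Riemann
sums bracket the integral, and they differ by the telescoping sum `h (f a - f b)`. For `f t = 1 / t`
on `[1, x]` this gives `0 ≤ U_n - log x ≤ (x - 1)² / (n x)`. Conversely, any `y` satisfying the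
bound for all `n` lies within `2 (x - 1)² / (n x)` of `log x` for every `n`, hence equals it. -/

open Finset intervalIntegral Filter

section RiemannSums

variable {f : ℝ → ℝ} {a h : ℝ} {n : ℕ}

lemma antitoneOn_comp_mul_add (hh : 0 < h) (hf : AntitoneOn f (Set.Icc a (a + n * h))) :
    AntitoneOn (fun s => f (h * s + a)) (Set.Icc 0 n) := by
  intro s hs t ht hst
  refine hf ⟨?_, ?_⟩ ⟨?_, ?_⟩ (by gcongr) <;>
    simp only [Set.mem_Icc] at hs ht <;> nlinarith

lemma integral_eq_mul_integral_comp_mul_add (f : ℝ → ℝ) (a h : ℝ) (n : ℕ) :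
    ∫ x in a..a + n * h, f x = h * ∫ s in (0 : ℝ)..n, f (h * s + a) := by
  rw [mul_integral_comp_mul_add]
  congr 1 <;> ring

theorem AntitoneOn.integral_le_mul_sum_range (hh : 0 < h)
    (hf : AntitoneOn f (Set.Icc a (a + n * h))) :
    ∫ x in a..a + n * h, f x ≤ h * ∑ i ∈ range n, f (a + i * h) := by
  have hg := antitoneOn_comp_mul_add hh hf
  rw [← zero_add (n : ℝ)] at hg
  rw [integral_eq_mul_integral_comp_mul_add, ← zero_add (n : ℝ)]
  refine mul_le_mul_of_nonneg_left
    (hg.integral_le_sum.trans_eq (sum_congr rfl fun i _ => ?_)) hh.le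
  ring_nf

theorem AntitoneOn.mul_sum_range_le_integral (hh : 0 < h)
    (hf : AntitoneOn f (Set.Icc a (a + n * h))) :
    h * ∑ i ∈ range n, f (a + (i + 1) * h) ≤ ∫ x in a..a + n * h, f x := by
  have hg := antitoneOn_comp_mul_add hh hf
  rw [← zero_add (n : ℝ)] at hg
  rw [integral_eq_mul_integral_comp_mul_add, ← zero_add (n : ℝ)]
  refine mul_le_mul_of_nonneg_left
    ((sum_congr rfl fun i _ => ?_).trans_le hg.sum_le_integral) hh.le
  push_cast
  ring_nf

theorem AntitoneOn.abs_mul_sum_range_sub_integral_le (hh : 0 < h)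
    (hf : AntitoneOn f (Set.Icc a (a + n * h))) :
    |h * ∑ i ∈ range n, f (a + i * h) - ∫ x in a..a + n * h, f x| ≤ h * (f a - f (a + n * h)) := by
  have htelescope : h * ∑ i ∈ range n, f (a + i * h) - h * ∑ i ∈ range n, f (a + (i + 1) * h)
      = h * (f a - f (a + n * h)) := by
    rw [← mul_sub, ← sum_sub_distrib]
    have := sum_range_sub' (fun i : ℕ => f (a + i * h)) n
    push_cast at this
    rw [this, zero_mul, add_zero]
  rw [abs_of_nonneg (sub_nonneg.mpr (hf.integral_le_mul_sum_range hh))]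
  linarith [hf.mul_sum_range_le_integral hh]

end RiemannSums

theorem abs_sum_range_one_div_sub_log_le {x : ℝ} (hx : 1 < x) {n : ℕ} (hn : 0 < n) :
    |∑ k ∈ range n, ((x - 1) / n) * (1 / (1 + (k : ℝ) * (x - 1) / n)) - Real.log x| ≤
      (x - 1) ^ 2 / (n * x) := by
  have hn' : (0 : ℝ) < n := Nat.cast_pos.mpr hn
  have hh : 0 < (x - 1) / n := div_pos (by linarith) hn'
  have hend : 1 + n * ((x - 1) / n) = x := by field_simp; ring
  have hf : AntitoneOn (fun t : ℝ => 1 / t) (Set.Icc 1 (1 + n * ((x - 1) / n))) := by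
    simpa only [one_div] using inv_antitoneOn_Icc_right (α := ℝ) one_pos
  have hbound := hf.abs_mul_sum_range_sub_integral_le hh
  rw [hend, integral_one_div_of_pos one_pos (by linarith), div_one, mul_sum] at hbound
  convert hbound using 4 with k
  · ring
  · field_simp

theorem eq_of_forall_abs_sub_le_div_nat {a b C : ℝ} (h : ∀ n : ℕ, 0 < n → |a - b| ≤ C / n) :
    a = b := by
  have hle : |a - b| ≤ 0 :=
    ge_of_tendsto (tendsto_const_div_atTop_nhds_zero_nat C)
      (eventually_atTop.mpr ⟨1, fun n hn => h n hn⟩)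
  exact sub_eq_zero.mp (abs_nonpos_iff.mp hle)

theorem stmt_2 (x y : ℝ) (hx : 1 < x) :
    y = Real.log x ↔
      ∀ n : ℕ, 0 < n →
        |(∑ k ∈ Finset.range n, ((x - 1) / n) * (1 / (1 + (k : ℝ) * (x - 1) / n))) - y| ≤
          (x ^ 2 - 2 * x + 1) / (n * x) := by
  have hsq : x ^ 2 - 2 * x + 1 = (x - 1) ^ 2 := by ring
  simp_rw [hsq]
  refine ⟨fun hy n hn => hy ▸ abs_sum_range_one_div_sub_log_le hx hn, fun hU => ?_⟩
  refine eq_of_forall_abs_sub_le_div_nat (C := 2 * ((x - 1) ^ 2 / x)) fun n hn => ?_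
  calc |y - Real.log x| ≤ _ + _ := abs_sub_le _ _ _
    _ ≤ (x - 1) ^ 2 / (n * x) + (x - 1) ^ 2 / (n * x) :=
        add_le_add ((abs_sub_comm _ _).le.trans (hU n hn)) (abs_sum_range_one_div_sub_log_le hx hn)
    _ = 2 * ((x - 1) ^ 2 / x) / n := by ring
end

section
/- If p(x,y) is a real polynomial in two variables such that p(x, e^x) = 0 for all real x, then p is the zero polynomial. -/
/-!
View `p` as a polynomial in `y` of degree `n` with coefficients in `ℝ[x]`, and let `c` be its
leading coefficient. Substituting `y = 1/z` and clearing denominators (the reversed polynomial `r`)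
turns `p(x, eˣ) = 0` into `r(x, e⁻ˣ) = 0`, and `r(x, z) = c(x) + z · s(x, z)`. Hence
`c(x) = -e⁻ˣ · s(x, e⁻ˣ)`, which tends to `0` as `x → ∞` because exponentials beat
polynomials.
A polynomial with a finite limit at `∞` is constant, so `c = 0`, i.e. `p = 0`.
-/

open Filter Topology Real Polynomial Finset
open scoped Polynomial.Bivariate

namespace Polynomial

theorem Bivariate.eval_equivMvPolynomial {R : Type*} [CommSemiring R] (x y : R) (q : R[X][Y]) :
    MvPolynomial.eval ![x, y] (equivMvPolynomial R q) = q.evalEval x y := by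
  have : (MvPolynomial.eval ![x, y]).comp (equivMvPolynomial R).toRingHom =
      evalEvalRingHom x y := by
    ext <;> simp
  exact RingHom.congr_fun this q

theorem tendsto_eval_mul_exp_neg_pow_succ (P : ℝ[X]) (k : ℕ) :
    Tendsto (fun x => P.eval x * exp (-x) ^ (k + 1)) atTop (𝓝 0) := by
  have := P.tendsto_div_exp_atTop.mul (tendsto_exp_neg_atTop_nhds_zero.pow k)
  rw [zero_mul] at this
  refine this.congr fun x => ?_
  rw [exp_neg, pow_succ]
  ring

theorem tendsto_exp_neg_mul_evalEval_exp_neg (s : ℝ[X][Y]) :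
    Tendsto (fun x => exp (-x) * s.evalEval x (exp (-x))) atTop (𝓝 0) := by
  have hsum : ∀ x, exp (-x) * s.evalEval x (exp (-x)) =
      ∑ i ∈ range (s.natDegree + 1), (s.coeff i).eval x * exp (-x) ^ (i + 1) := by
    intro x
    simp only [evalEval, eval_eq_sum_range (p := s), eval_finsetSum, eval_mul, eval_pow, eval_C,
      mul_sum, pow_succ]
    ring_nf
  simp only [hsum]
  simpa using tendsto_finsetSum _ fun i _ => tendsto_eval_mul_exp_neg_pow_succ (s.coeff i) i

theorem eq_zero_of_evalEval_exp_eq_zero (q : ℝ[X][Y]) (h : ∀ x, q.evalEval x (exp x) = 0) :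
    q = 0 := by
  have hreverse : ∀ x, q.reverse.evalEval x (exp (-x)) = 0 := by
    intro x
    have := invertibleOfNonzero (exp_ne_zero x)
    rw [← eval₂_evalRingHom, exp_neg, ← invOf_eq_inv, eval₂_reverse_eq_zero_iff,
      eval₂_evalRingHom]
    exact h x
  have hlead : ∀ x,
      q.leadingCoeff.eval x = -(exp (-x) * q.reverse.divX.evalEval x (exp (-x))) := by
    intro x
    have := congrArg (evalEval x (exp (-x))) (X_mul_divX_add q.reverse)
    simp only [evalEval_add, evalEval_mul, evalEval_X, evalEval_C, coeff_zero_reverse,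
      hreverse] at this
    linarith
  have hlim : Tendsto (fun x => q.leadingCoeff.eval x) atTop (𝓝 0) := by
    simpa [hlead] using (tendsto_exp_neg_mul_evalEval_exp_neg q.reverse.divX).neg
  simpa using (q.leadingCoeff.tendsto_nhds_iff.mp hlim).1

end Polynomial

theorem stmt_12 (p : MvPolynomial (Fin 2) ℝ)
    (h : ∀ x : ℝ, MvPolynomial.eval ![x, Real.exp x] p = 0) : p = 0 := by
  obtain ⟨q, rfl⟩ := (Bivariate.equivMvPolynomial ℝ).surjective p
  rw [map_eq_zero_iff _ (Bivariate.equivMvPolynomial ℝ).injective]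
  refine eq_zero_of_evalEval_exp_eq_zero q fun x => ?_
  rw [← Bivariate.eval_equivMvPolynomial]
  exact h x
end

section
/- If a function f : \mathbb{R} \to \mathbb{R} has a graph that is a countable union of semialgebraic subsets of \mathbb{R}^2, then there exists an interval (a,b) with a < b on which f agrees with a semialgebraic function; in particular f is not equal to e^x, since exp restricted to any nontrivial interval is not semialgebraic. -/
/-!
The graph of `f` is a countable union of basic semialgebraic sets, each of which is locally
closed and hence σ-compact. Their projections to the `x`-axis are countably many σ-compact sets
covering `ℝ`, so by Baire one of them contains an interval `(a, b)`; over that interval the graph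
of `f` is the basic piece cut down to the strip `a < x < b`.

For `exp`: a semialgebraic subset of a graph has empty interior, so every nonempty basic piece has
a nonzero equation, and the product of these equations is a nonzero polynomial `Q` with
`Q(x, eˣ) = 0` on `(a, b)`. By analytic continuation this holds on all of `ℝ`, and comparing
growth as `x → ∞` forces `Q = 0`.
-/

def IsBasicSemialgebraicR2 (s : Set (ℝ × ℝ)) : Prop :=
  ∃ E I : Finset (MvPolynomial (Fin 2) ℝ),
    s = {p : ℝ × ℝ |
      (∀ q ∈ E, MvPolynomial.eval ![p.1, p.2] q = 0) ∧
      ∀ q ∈ I, 0 < MvPolynomial.eval ![p.1, p.2] q}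

def IsSemialgebraicR2 (s : Set (ℝ × ℝ)) : Prop :=
  ∃ (n : ℕ) (f : Fin n → Set (ℝ × ℝ)), (∀ i, IsBasicSemialgebraicR2 (f i)) ∧ s = ⋃ i, f i

open Set Filter Topology

section Topology

variable {X : Type*} [TopologicalSpace X]

theorem IsLocallyClosed.isSigmaCompact [LocallyCompactSpace X] [SecondCountableTopology X]
    {s : Set X} (hs : IsLocallyClosed s) : IsSigmaCompact s :=
  have := hs.locallyCompactSpace
  isSigmaCompact_iff_sigmaCompactSpace.mpr inferInstance

theorem nonempty_interior_of_iUnion_of_isSigmaCompact [BaireSpace X] [T2Space X] [Nonempty X]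
    {ι : Type*} [Countable ι] {S : ι → Set X} (hS : ∀ i, IsSigmaCompact (S i))
    (hU : ⋃ i, S i = univ) : ∃ i, (interior (S i)).Nonempty := by
  choose K hK hKS using hS
  obtain ⟨⟨i, n⟩, hin⟩ := nonempty_interior_of_iUnion_of_closed
    (f := fun j : ι × ℕ => K j.1 j.2) (fun j => (hK j.1 j.2).isClosed)
    (by rw [iUnion_prod']; simpa only [hKS] using hU)
  exact ⟨i, hin.mono (interior_mono (hKS i ▸ subset_iUnion (K i) n))⟩

end Topology

theorem graph_inter_eq_inter_fst_preimage {α β : Type*} {f : α → β} {S : Set (α × β)}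
    {s : Set α} (hS : S ⊆ {p | p.2 = f p.1}) (hs : s ⊆ Prod.fst '' S) :
    {p : α × β | p.1 ∈ s ∧ p.2 = f p.1} = S ∩ Prod.fst ⁻¹' s := by
  ext ⟨x, y⟩
  refine ⟨fun ⟨hx, hy⟩ => ⟨?_, hx⟩, fun ⟨hp, hx⟩ => ⟨hx, hS hp⟩⟩
  obtain ⟨⟨x', y'⟩, hp, rfl⟩ := hs hx
  obtain rfl : y' = f x' := hS hp
  rwa [show y = f x' from hy]

section Semialgebraic

open MvPolynomial

def basicSemialgebraicSet (E I : Finset (MvPolynomial (Fin 2) ℝ)) : Set (ℝ × ℝ) :=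
  {p | (∀ q ∈ E, eval ![p.1, p.2] q = 0) ∧ ∀ q ∈ I, 0 < eval ![p.1, p.2] q}

theorem continuous_eval_pair (q : MvPolynomial (Fin 2) ℝ) :
    Continuous fun p : ℝ × ℝ => eval ![p.1, p.2] q :=
  (continuous_eval q).comp <| continuous_pi fun i => by
    fin_cases i
    exacts [continuous_fst, continuous_snd]

variable {E I : Finset (MvPolynomial (Fin 2) ℝ)}

theorem isLocallyClosed_basicSemialgebraicSet : IsLocallyClosed (basicSemialgebraicSet E I) := by
  refine ⟨⋂ q ∈ I, {p | 0 < eval ![p.1, p.2] q}, ⋂ q ∈ E, {p | eval ![p.1, p.2] q = 0},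
    isOpen_biInter_finset fun q _ => isOpen_lt continuous_const (continuous_eval_pair q),
    isClosed_biInter fun q _ => isClosed_eq (continuous_eval_pair q) continuous_const, ?_⟩
  ext p
  simp only [basicSemialgebraicSet, mem_ofPred_eq, mem_inter_iff, mem_iInter]
  exact and_comm

theorem isOpen_basicSemialgebraicSet (hE : ∀ q ∈ E, q = 0) :
    IsOpen (basicSemialgebraicSet E I) := by
  convert isOpen_biInter_finset fun q (_ : q ∈ I) =>
    isOpen_lt continuous_const (continuous_eval_pair q) (f := fun _ => 0) using 1
  ext p
  simpa [basicSemialgebraicSet] using fun _ q hq => by simp [hE q hq]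

theorem basicSemialgebraicSet_inter (E' I' : Finset (MvPolynomial (Fin 2) ℝ)) :
    basicSemialgebraicSet E I ∩ basicSemialgebraicSet E' I' =
      basicSemialgebraicSet (E ∪ E') (I ∪ I') := by
  ext p
  simp only [basicSemialgebraicSet, mem_inter_iff, mem_ofPred_eq, Finset.forall_mem_union]
  tauto

theorem fst_preimage_Ioo_eq_basicSemialgebraicSet (a b : ℝ) :
    Prod.fst ⁻¹' Ioo a b = basicSemialgebraicSet ∅ {X 0 - C a, C b - X 0} := by
  ext p
  simp [basicSemialgebraicSet]

theorem IsBasicSemialgebraicR2.inter {s t : Set (ℝ × ℝ)} (hs : IsBasicSemialgebraicR2 s)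
    (ht : IsBasicSemialgebraicR2 t) : IsBasicSemialgebraicR2 (s ∩ t) := by
  obtain ⟨E, I, rfl⟩ := hs
  obtain ⟨E', I', rfl⟩ := ht
  exact ⟨_, _, basicSemialgebraicSet_inter E' I'⟩

theorem IsBasicSemialgebraicR2.isSemialgebraicR2 {s : Set (ℝ × ℝ)}
    (hs : IsBasicSemialgebraicR2 s) : IsSemialgebraicR2 s :=
  ⟨1, fun _ => s, fun _ => hs, (iUnion_const s).symm⟩

theorem IsBasicSemialgebraicR2.isSigmaCompact {s : Set (ℝ × ℝ)}
    (hs : IsBasicSemialgebraicR2 s) : IsSigmaCompact s := by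
  obtain ⟨E, I, rfl⟩ := hs
  exact isLocallyClosed_basicSemialgebraicSet.isSigmaCompact

theorem exists_mem_ne_zero_of_basicSemialgebraicSet_subset_graph
    {E I : Finset (MvPolynomial (Fin 2) ℝ)} {g : ℝ → ℝ} {p : ℝ × ℝ}
    (hp : p ∈ basicSemialgebraicSet E I)
    (hsub : basicSemialgebraicSet E I ⊆ {p | p.2 = g p.1}) : ∃ q ∈ E, q ≠ 0 := by
  by_contra! hE
  -- otherwise the set is open, and its trace on the vertical line through `p` is an open singleton
  have hopen : IsOpen {t : ℝ | (p.1, t) ∈ basicSemialgebraicSet E I} :=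
    (isOpen_basicSemialgebraicSet hE).preimage (by fun_prop)
  have hsingleton : {t : ℝ | (p.1, t) ∈ basicSemialgebraicSet E I} = {p.2} :=
    Subsingleton.eq_singleton_of_mem
      (fun s hs t ht => (@hsub (p.1, s) hs).trans (@hsub (p.1, t) ht).symm) hp
  exact not_isOpen_singleton p.2 (hsingleton ▸ hopen)

theorem IsSemialgebraicR2.exists_ne_zero_eval_eq_zero_of_subset_graph {s : Set (ℝ × ℝ)}
    {g : ℝ → ℝ} (hs : IsSemialgebraicR2 s) (hsub : s ⊆ {p | p.2 = g p.1}) :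
    ∃ Q : MvPolynomial (Fin 2) ℝ, Q ≠ 0 ∧ ∀ p ∈ s, eval ![p.1, p.2] Q = 0 := by
  obtain ⟨n, t, ht, rfl⟩ := hs
  choose E I hEI using ht
  refine ⟨∏ i, ∏ q ∈ (E i).filter (· ≠ 0), q, ?_, fun p hp => ?_⟩
  · exact Finset.prod_ne_zero_iff.mpr fun i _ =>
      Finset.prod_ne_zero_iff.mpr fun q hq => (Finset.mem_filter.mp hq).2
  obtain ⟨i, hi⟩ := mem_iUnion.mp hp
  rw [hEI i] at hi
  obtain ⟨q, hqE, hq⟩ := exists_mem_ne_zero_of_basicSemialgebraicSet_subset_graph hi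
    (hEI i ▸ (subset_iUnion t i).trans hsub)
  rw [map_prod]
  refine Finset.prod_eq_zero (Finset.mem_univ i) ?_
  rw [map_prod]
  exact Finset.prod_eq_zero (Finset.mem_filter.mpr ⟨hqE, hq⟩) (hi.1 q hqE)

end Semialgebraic

theorem exists_Ioo_isSemialgebraicR2_graph {f : ℝ → ℝ} {A : ℕ → Set (ℝ × ℝ)}
    (hA : ∀ n, IsSemialgebraicR2 (A n)) (hf : {p : ℝ × ℝ | p.2 = f p.1} = ⋃ n, A n) :
    ∃ a b : ℝ, a < b ∧ IsSemialgebraicR2 {p : ℝ × ℝ | p.1 ∈ Ioo a b ∧ p.2 = f p.1} := by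
  choose m T hT hAT using hA
  set piece : (Σ n, Fin (m n)) → Set (ℝ × ℝ) := fun j => T j.1 j.2
  have hgraph : {p : ℝ × ℝ | p.2 = f p.1} = ⋃ j, piece j := by
    rw [hf, iUnion_sigma]
    exact iUnion_congr hAT
  have hcover : ⋃ j, Prod.fst '' piece j = univ := by
    rw [← image_iUnion, ← hgraph]
    exact eq_univ_of_forall fun x => ⟨(x, f x), rfl, rfl⟩
  obtain ⟨j, x, hx⟩ := nonempty_interior_of_iUnion_of_isSigmaCompact
    (S := fun j => Prod.fst '' piece j)
    (fun j => (hT j.1 j.2).isSigmaCompact.image continuous_fst) hcover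
  obtain ⟨a, b, hxab, hab⟩ := mem_nhds_iff_exists_Ioo_subset.mp (mem_interior_iff_mem_nhds.mp hx)
  refine ⟨a, b, hxab.1.trans hxab.2, ?_⟩
  rw [graph_inter_eq_inter_fst_preimage (hgraph ▸ subset_iUnion piece j) hab]
  exact ((hT j.1 j.2).inter ⟨_, _, fst_preimage_Ioo_eq_basicSemialgebraicSet a b⟩).isSemialgebraicR2

section Exp

open Polynomial Polynomial.Bivariate Real

theorem Polynomial.Bivariate.eval_equivMvPolynomial_s17 {R : Type*} [CommSemiring R]
    (P : R[X][Y]) (x y : R) :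
    MvPolynomial.eval ![x, y] (equivMvPolynomial R P) = P.evalEval x y := by
  induction P using Polynomial.induction_on' with
  | add P Q hP hQ => simp only [map_add, hP, hQ, evalEval_add]
  | monomial n a =>
    induction a using Polynomial.induction_on' with
    | add a b ha hb => simp only [map_add, ha, hb, evalEval_add]
    | monomial k r => simp [← C_mul_X_pow_eq_monomial, evalEval_C]

theorem Polynomial.evalEval_eq_sum_range {R : Type*} [CommSemiring R] (P : R[X][Y]) (x y : R) :
    P.evalEval x y = ∑ k ∈ Finset.range (P.natDegree + 1), (P.coeff k).eval x * y ^ k := by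
  simp [evalEval, eval_eq_sum_range (p := P), eval_finsetSum]

theorem Polynomial.tendsto_eval_mul_exp_pow_div_exp_pow (p : ℝ[X]) {k d : ℕ} (hkd : k < d) :
    Tendsto (fun x => p.eval x * exp x ^ k / exp x ^ d) atTop (𝓝 0) := by
  obtain ⟨m, rfl⟩ := Nat.exists_eq_add_of_lt hkd
  have hlim := p.tendsto_div_exp_atTop.mul
    (tendsto_exp_atTop.inv_tendsto_atTop.pow m)
  rw [zero_mul] at hlim
  refine hlim.congr fun x => ?_
  have := exp_ne_zero x
  simp only [Pi.inv_apply, inv_pow]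
  field_simp
  ring

theorem Polynomial.Bivariate.eq_zero_of_evalEval_exp_eq_zero {P : ℝ[X][Y]}
    (h : ∀ᶠ x in atTop, P.evalEval x (exp x) = 0) : P = 0 := by
  by_contra hP
  set d := P.natDegree
  -- dividing `P(x, eˣ) = 0` by `e^{dx}` shows that the leading coefficient tends to `0`
  have hlead : Tendsto (fun x => P.leadingCoeff.eval x) atTop (𝓝 0) := by
    have hrest := (tendsto_finsetSum (Finset.range d) fun k hk =>
      (P.coeff k).tendsto_eval_mul_exp_pow_div_exp_pow (Finset.mem_range.mp hk)).neg
    rw [Finset.sum_const_zero, neg_zero] at hrest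
    refine hrest.congr' (h.mono fun x hx => ?_)
    rw [evalEval_eq_sum_range, Finset.sum_range_succ] at hx
    have := pow_ne_zero d (exp_ne_zero x)
    rw [← Finset.sum_div, neg_eq_iff_eq_neg, div_eq_iff this, leadingCoeff]
    linear_combination hx
  have := ((tendsto_nhds_iff _).mp hlead).1
  exact hP (leadingCoeff_eq_zero.mp (leadingCoeff_eq_zero.mp this))

theorem analyticOnNhd_eval_exp (q : MvPolynomial (Fin 2) ℝ) :
    AnalyticOnNhd ℝ (fun x => MvPolynomial.eval ![x, exp x] q) univ := by
  simp_rw [← MvPolynomial.coe_aeval_eq_eval]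
  refine AnalyticOnNhd.aeval_mvPolynomial (fun i => ?_) q
  fin_cases i
  exacts [analyticOnNhd_id, analyticOnNhd_rexp]

theorem MvPolynomial.eq_zero_of_eval_exp_eq_zero_on_Ioo {q : MvPolynomial (Fin 2) ℝ} {a b : ℝ}
    (hab : a < b) (h : ∀ x ∈ Ioo a b, eval ![x, exp x] q = 0) : q = 0 := by
  have hzero : EqOn (fun x => eval ![x, exp x] q) 0 univ :=
    (analyticOnNhd_eval_exp q).eqOn_zero_of_preconnected_of_eventuallyEq_zero
      isPreconnected_univ (mem_univ ((a + b) / 2))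
      (eventually_of_mem (Ioo_mem_nhds (by linarith) (by linarith)) h)
  rw [← (equivMvPolynomial ℝ).apply_symm_apply q,
    map_eq_zero_iff _ (equivMvPolynomial ℝ).injective]
  refine eq_zero_of_evalEval_exp_eq_zero (Eventually.of_forall fun x => ?_)
  rw [← eval_equivMvPolynomial_s17, AlgEquiv.apply_symm_apply]
  exact hzero (mem_univ x)

end Exp

theorem not_isSemialgebraicR2_graph_exp_Ioo {a b : ℝ} (hab : a < b) :
    ¬ IsSemialgebraicR2 {p : ℝ × ℝ | p.1 ∈ Ioo a b ∧ p.2 = Real.exp p.1} := by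
  intro hs
  obtain ⟨Q, hQ, hQs⟩ := hs.exists_ne_zero_eval_eq_zero_of_subset_graph fun _ hp => hp.2
  exact hQ (MvPolynomial.eq_zero_of_eval_exp_eq_zero_on_Ioo hab fun x hx => hQs (x, _) ⟨hx, rfl⟩)

theorem stmt_17 (f : ℝ → ℝ)
    (h : ∃ A : ℕ → Set (ℝ × ℝ), (∀ n, IsSemialgebraicR2 (A n)) ∧
      {p : ℝ × ℝ | p.2 = f p.1} = ⋃ n, A n) :
    (∃ a b : ℝ, a < b ∧
        IsSemialgebraicR2 {p : ℝ × ℝ | p.1 ∈ Set.Ioo a b ∧ p.2 = f p.1}) ∧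
      f ≠ Real.exp := by
  obtain ⟨A, hA, hf⟩ := h
  have hsemialg := exists_Ioo_isSemialgebraicR2_graph hA hf
  refine ⟨hsemialg, ?_⟩
  rintro rfl
  obtain ⟨a, b, hab, hs⟩ := hsemialg
  exact not_isSemialgebraicR2_graph_exp_Ioo hab hs
end
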